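/- Let w ∈ G(m, p, n). Suppose that ℓ_R(w) = codimfix(w) and that there exists a subset S of the cycles of w whose total weight is 0 (mod p) but which cannot be partitioned into pairs of cycles whose weights sum to 0 in ℤ/mℤ together with singleton sets each containing a cycle of weight 0 (mod p). Then there is an element of [id, w]_{cdf} that does not belong to [id, w]_{ℓ_R}. -/

import Mathlib

open Equiv Finset
@[ext]
structure GW (m n : ℕ) where
  perm : Equiv.Perm (Fin n)
  wt : Fin n → ZMod m
namespace GW
variable {m n : ℕ}
instance : Mul (GW m n) :=
  ⟨fun x y => ⟨x.perm * y.perm, fun i => x.wt i + y.wt (x.perm⁻¹ i)⟩⟩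
instance : One (GW m n) := ⟨⟨1, 0⟩⟩
instance : Inv (GW m n) := ⟨fun x => ⟨x.perm⁻¹, fun i => -x.wt (x.perm i)⟩⟩
@[simp] theorem mul_perm (x y : GW m n) : (x * y).perm = x.perm * y.perm := rfl
@[simp] theorem mul_wt (x y : GW m n) (i : Fin n) :
    (x * y).wt i = x.wt i + y.wt (x.perm⁻¹ i) := rfl
@[simp] theorem one_perm : (1 : GW m n).perm = 1 := rfl
@[simp] theorem one_wt (i : Fin n) : (1 : GW m n).wt i = 0 := rfl
@[simp] theorem inv_perm (x : GW m n) : (x⁻¹).perm = x.perm⁻¹ := rfl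
@[simp] theorem inv_wt (x : GW m n) (i : Fin n) : (x⁻¹).wt i = -x.wt (x.perm i) := rfl
private theorem gw_mul_assoc (a b c : GW m n) : a * b * c = a * (b * c) := by
  ext i
  · simp [mul_assoc]
  · simp [mul_inv_rev, add_assoc]
private theorem gw_one_mul (a : GW m n) : 1 * a = a := by ext i <;> simp
private theorem gw_mul_one (a : GW m n) : a * 1 = a := by ext i <;> simp
private theorem gw_inv_mul_cancel (a : GW m n) : a⁻¹ * a = 1 := by ext i <;> simp
instance : Group (GW m n) where
  mul := (· * ·)
  one := 1
  inv := Inv.inv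
  mul_assoc := gw_mul_assoc
  one_mul := gw_one_mul
  mul_one := gw_mul_one
  inv_mul_cancel := gw_inv_mul_cancel
def cycleOf (w : GW m n) (i : Fin n) : Finset (Fin n) :=
  Finset.univ.filter fun j => w.perm.SameCycle i j
def cycles (w : GW m n) : Finset (Finset (Fin n)) :=
  Finset.univ.image fun i => w.cycleOf i
def cycWt (w : GW m n) (C : Finset (Fin n)) : ZMod m := ∑ i ∈ C, w.wt i
def numCycles (w : GW m n) : ℕ := (cycles w).card
def c0 (w : GW m n) : ℕ := ((cycles w).filter fun C => cycWt w C = 0).card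
def codimfix (w : GW m n) : ℕ := n - c0 w
def wtTot (w : GW m n) : ZMod m := ∑ i, w.wt i

-- NEW PIECES BELOW --

/-- The base relation on cycles of `w` induced by `u`: two cycles of `w` are related if
some cycle of `u` meets both of them. -/
def piRelBase (u w : GW m n) (C₁ C₂ : Finset (Fin n)) : Prop :=
  C₁ ∈ cycles w ∧ C₂ ∈ cycles w ∧ ∃ D ∈ cycles u, (D ∩ C₁).Nonempty ∧ (D ∩ C₂).Nonempty

/-- The equivalence relation on the cycles of `w` generated by `piRelBase`. -/
def piRel (u w : GW m n) : Finset (Fin n) → Finset (Fin n) → Prop :=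
  Relation.EqvGen (piRelBase u w)

open Classical in
/-- The part of the partition `Π_u(w)` containing the cycle `C` of `w`. -/
noncomputable def piPart (u w : GW m n) (C : Finset (Fin n)) : Finset (Finset (Fin n)) :=
  (cycles w).filter fun C' => piRel u w C C'

/-- The set partition `Π_u(w)` of the cycles of `w`, as the set of its parts. -/
noncomputable def piParts (u w : GW m n) : Finset (Finset (Finset (Fin n))) :=
  (cycles w).image fun C => piPart u w C

/-- The weight of a collection `B` of cycles: the sum of the weights of its cycles. -/
def partWt (w : GW m n) (B : Finset (Finset (Fin n))) : ZMod m :=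
  ∑ C ∈ B, cycWt w C

open Classical in
/-- The number of parts of `Π_u(w)` of nonzero total weight. -/
noncomputable def piPartsNonzeroWt (u w : GW m n) : ℕ :=
  ((piParts u w).filter fun B => partWt w B ≠ 0).card

/-- The support of a collection of cycles: the union of the cycles' underlying sets. -/
def supp (B : Finset (Finset (Fin n))) : Finset (Fin n) := B.sup id

/-- Restriction of a permutation to an invariant set `A` (junk value `1` if `A` is
not invariant): it agrees with `σ` on `A` and is the identity off `A`. -/
noncomputable def restrictPerm (σ : Equiv.Perm (Fin n)) (A : Finset (Fin n)) :
    Equiv.Perm (Fin n) :=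
  if h : ∀ i, σ i ∈ A ↔ i ∈ A then
    { toFun := fun i => if i ∈ A then σ i else i
      invFun := fun i => if i ∈ A then σ.symm i else i
      left_inv := by
        intro i
        by_cases hi : i ∈ A
        · simp [hi, (h i).mpr hi]
        · simp [hi]
      right_inv := by
        intro j
        by_cases hj : j ∈ A
        · have hs : σ.symm j ∈ A := by
            have h2 := h (σ.symm j)
            rw [Equiv.apply_symm_apply] at h2
            exact h2.mp hj
          simp [hj, hs]
        · simp [hj] }
  else 1


/-- The restriction `x|_A` of `x` to a subset `A` of `{1,…,n}` (stabilized by `x`):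
it agrees with `x` on `A` and acts as the identity, with weight `0`, off `A`. -/
noncomputable def restrict (x : GW m n) (A : Finset (Fin n)) : GW m n :=
  ⟨restrictPerm x.perm A, fun i => if i ∈ A then x.wt i else 0⟩

/-- The cycles of `x` contained in `A`; for `x = y|_A` this gives the cycles of the
restriction of `y` to `A`, viewed as an element of `G(m,1,#A)`. -/
def cyclesIn (x : GW m n) (A : Finset (Fin n)) : Finset (Finset (Fin n)) :=
  (cycles x).filter fun C => C ⊆ A

/-- The monomial matrix representing `w`: the nonzero entry in column `j` sits in row
`w.perm j` and equals `ζ^(a_(w.perm j))`, where `ζ = exp(2πi/m)`. -/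
noncomputable def toMatrix (w : GW m n) : Matrix (Fin n) (Fin n) ℂ :=
  Matrix.of fun i j =>
    if w.perm j = i then Complex.exp (2 * Real.pi * Complex.I * ((w.wt i).val : ℂ) / (m : ℂ))
    else 0

/-- `S` (a set of cycles of `w`) can be partitioned into singletons whose weight is
`0 (mod p)` and pairs of cycles whose weights sum to `0` in `ℤ/mℤ`; encoded by an
involution pairing up the cycles. -/
def PairedUp (p : ℕ) (hpm : p ∣ m) (w : GW m n) (S : Finset (Finset (Fin n))) : Prop :=
  ∃ π : {C // C ∈ S} → {C // C ∈ S}, Function.Involutive π ∧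
    (∀ C, π C = C → ZMod.castHom hpm (ZMod p) (cycWt w C.1) = 0) ∧
    (∀ C, π C ≠ C → cycWt w C.1 + cycWt w (π C).1 = 0)

/-- Membership in `G(m,p,n)`: the total weight is `0 (mod p)`. -/
def Gmem (p : ℕ) (hpm : p ∣ m) (w : GW m n) : Prop :=
  ZMod.castHom hpm (ZMod p) (wtTot w) = 0

/-- A reflection of `G(m,p,n)`: an element of the group whose fixed space has codimension 1. -/
def IsRefl (p : ℕ) (hpm : p ∣ m) (t : GW m n) : Prop :=
  Gmem p hpm t ∧ codimfix t = 1

/-- The reflection length of `w` with respect to the reflections of `G(m,p,n)`. -/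
noncomputable def lR (p : ℕ) (hpm : p ∣ m) (w : GW m n) : ℕ :=
  sInf {k | ∃ l : List (GW m n), (∀ t ∈ l, IsRefl p hpm t) ∧ l.length = k ∧ l.prod = w}

/-- The order `≤_f` determined by a subadditive function `f`. -/
def leF (f : GW m n → ℕ) (x y : GW m n) : Prop := f x + f (x⁻¹ * y) = f y

/-- The interval `[id, w]_f` inside the poset `(G(m,p,n), ≤_f)`. -/
def interval (p : ℕ) (hpm : p ∣ m) (f : GW m n → ℕ) (w : GW m n) : Set (GW m n) :=
  {u | Gmem p hpm u ∧ leF f u w}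

/-- A vector `v ∈ ℂⁿ` is regular for `G(m,p,n)` if it is fixed by no reflection. -/
def IsRegularVec (p : ℕ) (hpm : p ∣ m) (v : Fin n → ℂ) : Prop :=
  ∀ t : GW m n, IsRefl p hpm t → (toMatrix t).mulVec v ≠ v

/-- An element `w ∈ G(m,p,n)` is regular if it has an eigenvector that is a regular vector. -/
def IsRegularElt (p : ℕ) (hpm : p ∣ m) (w : GW m n) : Prop :=
  ∃ v : Fin n → ℂ, v ≠ 0 ∧ (∃ c : ℂ, (toMatrix w).mulVec v = c • v) ∧ IsRegularVec p hpm v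

end GW

/-!
Let `A` be the union of the cycles in `S` and split `w = u v` with `u = w|_A`, `v = w|_{Aᶜ}`.
The fixed-space codimension is additive on this splitting, so `u ≤_cdf w`, and `u ∈ G(m,p,n)`
because the weight of `S` is `0 (mod p)`. Since `codimfix ≤ ℓ_R` on `G(m,p,n)`, `u ≤_{ℓ_R} w`
would force `ℓ_R(u) = codimfix(u)`.

Left multiplication by a reflection acts on the multiset of cycle weights by shifting one weight
by an element that is `0 (mod p)`, merging two weights into their sum, or splitting one weight
into two. So it removes at most one zero weight, and in a factorization of `u` into
`codimfix(u)` reflections every step removes exactly one. Such steps preserve the property that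
the weights split into singletons `≡ 0 (mod p)` and pairs `{a, -a}`, which holds for the
identity. The cycle weights of `u` are those of `S` together with zeros, so `S` would be paired up.
-/

namespace Equiv.Perm

variable {α : Type*} {f : Perm α} {x y : α}

theorem SameCycle.mem_of_mapsTo [Finite α] {s : Set α} (h : f.SameCycle x y) (hx : x ∈ s)
    (hs : Set.MapsTo f s s) : y ∈ s := by
  obtain ⟨k, rfl⟩ := h.exists_nat_pow_eq
  rw [← iterate_eq_pow]
  exact hs.iterate k hx

theorem sameCycle_of_apply_eq (h : f x = y) : f.SameCycle x y :=
  h ▸ sameCycle_apply_right.2 .rfl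

section SwapMul

variable [DecidableEq α] {σ : Perm α} {i j : α}

theorem swap_mul_apply_of_not_sameCycle (hi : ¬σ.SameCycle i x) (hj : ¬σ.SameCycle j x) :
    (swap i j * σ) x = σ x :=
  swap_apply_of_ne_of_ne (fun h => hi (sameCycle_of_apply_eq h).symm)
    (fun h => hj (sameCycle_of_apply_eq h).symm)

theorem swap_mul_apply_of_sameCycle (hij : ¬σ.SameCycle i j) (hx : σ.SameCycle i x)
    (hσx : σ x ≠ i) : (swap i j * σ) x = σ x :=
  swap_apply_of_ne_of_ne hσx fun h => hij (hx.trans (sameCycle_of_apply_eq h))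

variable [Finite α]

theorem sameCycle_swap_mul_of_sameCycle (hij : ¬σ.SameCycle i j) (hx : σ.SameCycle i x) :
    (swap i j * σ).SameCycle i x := by
  refine (hx.mem_of_mapsTo (s := {y | σ.SameCycle i y ∧ (swap i j * σ).SameCycle i y})
    ⟨.rfl, .rfl⟩ fun y ⟨hy, hτy⟩ => ⟨sameCycle_apply_right.2 hy, ?_⟩).2
  by_cases hσy : σ y = i
  · exact hσy ▸ .rfl
  · rw [← swap_mul_apply_of_sameCycle hij hy hσy]
    exact sameCycle_apply_right.2 hτy

theorem sameCycle_swap_mul (hij : ¬σ.SameCycle i j) : (swap i j * σ).SameCycle i j := by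
  -- `σ⁻¹ i` lies on the cycle of `i` and is sent to `j`
  have h := sameCycle_swap_mul_of_sameCycle hij (sameCycle_symm_apply_right.2 (.refl σ i))
  rwa [← sameCycle_apply_right, Perm.mul_apply, apply_symm_apply, swap_apply_left] at h

theorem sameCycle_swap_mul_iff_of_not_sameCycle (hi : ¬σ.SameCycle i x)
    (hj : ¬σ.SameCycle j x) : (swap i j * σ).SameCycle x y ↔ σ.SameCycle x y := by
  have hfar : ∀ z, σ.SameCycle x z → (swap i j * σ) z = σ z := fun z hz =>
    swap_mul_apply_of_not_sameCycle (fun h => hi (h.trans hz.symm)) fun h => hj (h.trans hz.symm)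
  constructor
  · intro h
    exact h.mem_of_mapsTo (s := {z | σ.SameCycle x z}) .rfl fun z (hz : σ.SameCycle x z) =>
      (hfar z hz).symm ▸ sameCycle_apply_right.2 hz
  · intro h
    exact (h.mem_of_mapsTo (s := {z | σ.SameCycle x z ∧ (swap i j * σ).SameCycle x z})
      ⟨.rfl, .rfl⟩ fun z ⟨hz, hτz⟩ =>
        ⟨sameCycle_apply_right.2 hz, hfar z hz ▸ sameCycle_apply_right.2 hτz⟩).2

theorem sameCycle_swap_mul_iff_of_sameCycle (hij : ¬σ.SameCycle i j)
    (hx : σ.SameCycle i x ∨ σ.SameCycle j x) :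
    (swap i j * σ).SameCycle x y ↔ σ.SameCycle i y ∨ σ.SameCycle j y := by
  have hji : ¬σ.SameCycle j i := fun h => hij h.symm
  have hτ : ∀ z, σ.SameCycle i z ∨ σ.SameCycle j z → (swap i j * σ).SameCycle i z := by
    rintro z (hz | hz)
    · exact sameCycle_swap_mul_of_sameCycle hij hz
    · rw [swap_comm] at *
      exact (sameCycle_swap_mul hji).symm.trans (sameCycle_swap_mul_of_sameCycle hji hz)
  refine ⟨fun h => ?_, fun hy => (hτ x hx).symm.trans (hτ y hy)⟩
  by_contra hy
  obtain ⟨hiy, hjy⟩ := not_or.1 hy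
  exact hiy ((sameCycle_swap_mul_iff_of_not_sameCycle hiy hjy).1 ((hτ x hx).trans h).symm).symm

/-- The arc `i, σ i, …, σ⁻¹ j` is closed under `swap i j * σ` and does not contain `j`. -/
theorem not_sameCycle_swap_mul (hne : i ≠ j) (hij : σ.SameCycle i j) :
    ¬(swap i j * σ).SameCycle i j := by
  classical
  have hex : ∃ r, 0 < r ∧ (σ ^ r) i = j := by
    obtain ⟨r, hr⟩ := hij.exists_nat_pow_eq
    exact ⟨r, Nat.pos_of_ne_zero fun h => hne (by simpa [h] using hr), hr⟩
  obtain ⟨hr0, hr⟩ := Nat.find_spec hex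
  set r := Nat.find hex
  have hmin : ∀ t, 0 < t → t < r → (σ ^ t) i ≠ j := fun t ht htr h =>
    Nat.find_min hex htr ⟨ht, h⟩
  set arc : Set α := {y | ∃ t < r, (σ ^ t) i = y}
  have harc : Set.MapsTo (swap i j * σ) arc arc := by
    rintro _ ⟨t, htr, rfl⟩
    rw [Perm.mul_apply, ← Perm.mul_apply σ, ← pow_succ']
    obtain h | h : t + 1 = r ∨ t + 1 < r := by omega
    · exact ⟨0, hr0, by rw [h, hr, swap_apply_right, pow_zero, one_apply]⟩
    refine ⟨t + 1, h, (swap_apply_of_ne_of_ne (fun hi => ?_) (hmin _ t.succ_pos h)).symm⟩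
    refine hmin (r - (t + 1)) (by omega) (by omega) ?_
    conv_lhs => rw [← hi]
    rw [← Perm.mul_apply, ← pow_add, Nat.sub_add_cancel h.le, hr]
  intro h
  obtain ⟨t, htr, ht⟩ := h.mem_of_mapsTo (s := arc) ⟨0, hr0, rfl⟩ harc
  rcases Nat.eq_zero_or_pos t with rfl | ht0
  · exact hne ht
  · exact hmin t ht0 htr ht

end SwapMul

end Equiv.Perm

namespace Multiset

variable {G : Type*} [AddCommGroup G] (K : AddSubgroup G)

inductive Pairable : Multiset G → Prop
  | zero : Pairable 0
  | cons {a : G} {M : Multiset G} : a ∈ K → Pairable M → Pairable (a ::ₘ M)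
  | cons_neg (a : G) {M : Multiset G} : Pairable M → Pairable (a ::ₘ -a ::ₘ M)

variable {K}

theorem Pairable.of_cons_zero {M : Multiset G} (h : Pairable K (0 ::ₘ M)) : Pairable K M := by
  generalize hN : 0 ::ₘ M = N at h
  induction h generalizing M with
  | zero => exact absurd hN cons_ne_zero
  | @cons a N ha _ ih =>
    obtain ⟨rfl, rfl⟩ | ⟨-, N', rfl, rfl⟩ := cons_eq_cons.1 hN
    · assumption
    · exact .cons ha (ih rfl)
  | @cons_neg a N hN' ih =>
    obtain ⟨rfl, rfl⟩ | ⟨ha, N', rfl, hN''⟩ := cons_eq_cons.1 hN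
    · simpa using Pairable.cons (zero_mem K) hN'
    · obtain ⟨ha', -⟩ | ⟨-, N'', rfl, rfl⟩ := cons_eq_cons.1 hN''
      · exact absurd (neg_eq_zero.1 ha') (Ne.symm ha)
      · exact .cons_neg a (ih rfl)

theorem pairable_replicate_zero (k : ℕ) : Pairable K (replicate k 0) := by
  induction k with
  | zero => exact .zero
  | succ k ih => exact .cons (zero_mem K) ih

theorem Pairable.of_add_replicate_zero {M : Multiset G} {k : ℕ}
    (h : Pairable K (M + replicate k 0)) : Pairable K M := by
  induction k with
  | zero => simpa using h
  | succ k ih => exact ih (Pairable.of_cons_zero (by rwa [replicate_succ, add_cons] at h))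

theorem Pairable.exists_pairing {α : Type*} [DecidableEq α] {s : Finset α} {f : α → G}
    (h : Pairable K (s.val.map f)) :
    ∃ π : α → α, ∀ x ∈ s, π x ∈ s ∧ π (π x) = x ∧ (π x = x → f x ∈ K) ∧
      (π x ≠ x → f x + f (π x) = 0) := by
  generalize hN : s.val.map f = N at h
  induction h generalizing s with
  | zero =>
    obtain rfl : s = ∅ := Finset.val_eq_zero.1 (map_eq_zero.1 hN)
    exact ⟨id, by simp⟩
  | @cons a N ha _ ih =>
    obtain ⟨x, hx, rfl, hxN⟩ := (map_eq_cons f _ _ _).2 hN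
    rw [← Finset.erase_val] at hxN
    obtain ⟨π, hπ⟩ := ih (s := s.erase x) hxN
    rw [Finset.mem_val] at hx
    refine ⟨fun y => if y = x then x else π y, fun y hy => ?_⟩
    by_cases hyx : y = x
    · simp [hyx, hx, ha]
    · have := hπ y (Finset.mem_erase.2 ⟨hyx, hy⟩)
      grind
  | @cons_neg a N _ ih =>
    obtain ⟨x, hx, rfl, hxN⟩ := (map_eq_cons f _ _ _).2 hN
    rw [← Finset.erase_val] at hxN
    obtain ⟨x', hx', hfx', hxN'⟩ := (map_eq_cons f _ _ _).2 hxN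
    rw [← Finset.erase_val] at hxN'
    rw [Finset.mem_val] at hx hx'
    obtain ⟨π, hπ⟩ := ih (s := (s.erase x).erase x') hxN'
    have hxx' : x' ≠ x := (Finset.mem_erase.1 hx').1
    refine ⟨fun y => if y = x then x' else if y = x' then x else π y, fun y hy => ?_⟩
    by_cases hyx : y = x
    · subst hyx
      simp [hxx', Finset.mem_of_mem_erase hx', hfx']
    by_cases hyx' : y = x'
    · subst hyx'
      simp [hxx', hxx'.symm, hx, hfx']
    · have := hπ y (Finset.mem_erase.2 ⟨hyx', Finset.mem_erase.2 ⟨hyx, hy⟩⟩)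
      grind

variable (K)

/-- How the multiset of cycle weights changes under left multiplication by a reflection. -/
inductive ReflStep : Multiset G → Multiset G → Prop
  | shift {ξ : G} (a : G) (M : Multiset G) : ξ ∈ K → ReflStep (a ::ₘ M) ((ξ + a) ::ₘ M)
  | merge (a b : G) (M : Multiset G) : ReflStep (a ::ₘ b ::ₘ M) ((a + b) ::ₘ M)
  | split (a b : G) (M : Multiset G) : ReflStep ((a + b) ::ₘ M) (a ::ₘ b ::ₘ M)

variable {K} [DecidableEq G] {M M' : Multiset G}

theorem ReflStep.count_zero_le (h : ReflStep K M M') : M.count 0 ≤ M'.count 0 + 1 := by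
  rcases h with ⟨a, M, -⟩ | ⟨a, b, M⟩ | ⟨a, b, M⟩ <;> simp only [count_cons] <;>
    split_ifs <;> first | omega | simp_all

theorem ReflStep.pairable (h : ReflStep K M M') (hc : M'.count 0 + 1 = M.count 0)
    (hM : Pairable K M) : Pairable K M' := by
  cases h with
  | shift a M hξ =>
    obtain rfl : a = 0 := by
      by_contra ha
      simp only [count_cons, Ne.symm ha, if_false] at hc
      split_ifs at hc <;> omega
    simpa using hM.of_cons_zero.cons hξ
  | merge a b M =>
    by_cases ha : a = 0
    · subst ha
      simpa using hM.of_cons_zero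
    obtain rfl : b = 0 := by
      by_contra hb
      simp only [count_cons, Ne.symm ha, Ne.symm hb, if_false] at hc
      split_ifs at hc <;> omega
    simpa using (cons_swap a 0 M ▸ hM).of_cons_zero
  | split a b M =>
    obtain rfl : b = -a := by
      by_contra hb
      have hab : 0 ≠ a + b := fun h => hb (eq_neg_of_add_eq_zero_right h.symm)
      simp only [count_cons, hab, if_false] at hc
      split_ifs at hc <;> omega
    exact .cons_neg a (by rw [add_neg_cancel] at hM; exact hM.of_cons_zero)

end Multiset

namespace GW

variable {m n p : ℕ} {hpm : p ∣ m}

section Cycles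

variable {w x y : GW m n} {i j k : Fin n} {C D : Finset (Fin n)}

theorem mem_cycleOf : j ∈ cycleOf w i ↔ w.perm.SameCycle i j := by simp [cycleOf]

theorem mem_cycleOf_self (w : GW m n) (i : Fin n) : i ∈ cycleOf w i := mem_cycleOf.2 .rfl

theorem mem_cycles : C ∈ cycles w ↔ ∃ i, cycleOf w i = C := by simp [cycles]

theorem cycleOf_mem_cycles (w : GW m n) (i : Fin n) : cycleOf w i ∈ cycles w :=
  mem_cycles.2 ⟨i, rfl⟩

theorem cycleOf_eq_cycleOf (h : w.perm.SameCycle i j) : cycleOf w i = cycleOf w j := by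
  ext k
  simp only [mem_cycleOf]
  exact ⟨h.symm.trans, h.trans⟩

theorem eq_cycleOf_of_mem (hC : C ∈ cycles w) (hk : k ∈ C) : C = cycleOf w k := by
  obtain ⟨i, rfl⟩ := mem_cycles.1 hC
  exact cycleOf_eq_cycleOf (mem_cycleOf.1 hk)

theorem disjoint_of_mem_cycles (hC : C ∈ cycles w) (hD : D ∈ cycles w) (hne : C ≠ D) :
    Disjoint C D :=
  Finset.disjoint_left.2 fun _ hkC hkD =>
    hne ((eq_cycleOf_of_mem hC hkC).trans (eq_cycleOf_of_mem hD hkD).symm)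

theorem perm_mem_iff_of_mem_cycles (hC : C ∈ cycles w) : w.perm k ∈ C ↔ k ∈ C := by
  obtain ⟨i, rfl⟩ := mem_cycles.1 hC
  simp only [mem_cycleOf, Equiv.Perm.sameCycle_apply_right]

theorem cycleOf_eq_singleton (h : w.perm i = i) : cycleOf w i = {i} := by
  ext j
  simp only [mem_cycleOf, Finset.mem_singleton]
  exact ⟨fun hj => (hj.eq_of_left h).symm, fun hj => hj ▸ .rfl⟩

theorem cycles_eq_of_perm_eq (h : x.perm = y.perm) : cycles x = cycles y := by
  simp [cycles, cycleOf, h]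

def cycleWts (x : GW m n) : Multiset (ZMod m) := (cycles x).val.map (cycWt x)

theorem c0_eq_count (x : GW m n) : c0 x = (cycleWts x).count 0 := by
  rw [c0, cycleWts, Multiset.count_map, Finset.card_def, Finset.filter_val]
  simp_rw [eq_comm]

theorem cycleWts_of_cycles_eq_insert {E : Finset (Finset (Fin n))} (h : cycles x = insert C E)
    (hC : C ∉ E) : cycleWts x = cycWt x C ::ₘ E.val.map (cycWt x) := by
  rw [cycleWts, h, Finset.insert_val_of_notMem hC, Multiset.map_cons]

theorem cycleWts_of_perm_eq_one (h : x.perm = 1) : cycleWts x = Finset.univ.val.map x.wt := by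
  have hcyc : cycles x = Finset.univ.image fun i => {i} := by
    simp only [cycles, cycleOf_eq_singleton (w := x) (by simp [h])]
  rw [cycleWts, hcyc, Finset.image_val_of_injOn (fun a _ b _ => Finset.singleton_inj.1),
    Multiset.map_map]
  simp [Function.comp_def, cycWt]

theorem cycleWts_one : cycleWts (1 : GW m n) = Multiset.replicate n 0 := by
  simp [cycleWts_of_perm_eq_one, Multiset.map_const']

theorem c0_le (x : GW m n) : c0 x ≤ n :=
  calc c0 x ≤ (cycles x).card := Finset.card_filter_le _ _
    _ ≤ n := (Finset.card_image_le).trans (by simp)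

theorem cycWt_mul (hD : ∀ k, x.perm k ∈ D ↔ k ∈ D) :
    cycWt (x * y) D = cycWt x D + cycWt y D := by
  simp only [cycWt, mul_wt, Finset.sum_add_distrib, add_right_inj]
  refine Finset.sum_equiv x.perm⁻¹ (fun k => ?_) fun k _ => rfl
  simpa using hD (x.perm⁻¹ k)

theorem wtTot_mul (x y : GW m n) : wtTot (x * y) = wtTot x + wtTot y :=
  cycWt_mul (D := Finset.univ) (by simp)

end Cycles

def wtKer (p : ℕ) (hpm : p ∣ m) : AddSubgroup (ZMod m) :=
  (ZMod.castHom hpm (ZMod p)).toAddMonoidHom.ker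

theorem gmem_iff {x : GW m n} : Gmem p hpm x ↔ wtTot x ∈ wtKer p hpm := Iff.rfl

theorem Gmem.of_mul {x y : GW m n} (hxy : Gmem p hpm (x * y)) (hx : Gmem p hpm x) :
    Gmem p hpm y := by
  rw [gmem_iff, wtTot_mul] at hxy
  exact (AddSubgroup.add_mem_cancel_left _ hx).1 hxy

section Reflections

variable {y : GW m n} {i j k : Fin n} {a ξ : ZMod m} {C : Finset (Fin n)}

def transRefl (i j : Fin n) (a : ZMod m) : GW m n :=
  ⟨Equiv.swap i j, Pi.single i a - Pi.single j a⟩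

def diagRefl (i : Fin n) (ξ : ZMod m) : GW m n := ⟨1, Pi.single i ξ⟩

theorem transRefl_mul_self (i j : Fin n) (a : ZMod m) :
    transRefl i j a * transRefl i j a = 1 := by
  ext k
  · simp [transRefl]
  · rcases eq_or_ne i j with rfl | hij
    · simp [transRefl]
    · simp only [transRefl, mul_wt, Equiv.swap_inv, one_wt, Pi.sub_apply, Equiv.swap_apply_def]
      split_ifs <;> simp_all [hij.symm]

theorem swap_mem_iff (h : i ∈ C ↔ j ∈ C) (k : Fin n) :
    Equiv.swap i j k ∈ C ↔ k ∈ C := by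
  rw [Equiv.swap_apply_def]
  split_ifs with hi hj <;> simp_all

theorem cycWt_transRefl (h : i ∈ C ↔ j ∈ C) : cycWt (transRefl i j a) C = 0 := by
  simp [cycWt, transRefl, Finset.sum_sub_distrib, Finset.sum_pi_single', h]

theorem cycWt_diagRefl : cycWt (diagRefl i ξ) C = if i ∈ C then ξ else 0 :=
  Finset.sum_pi_single' i ξ C

theorem reflStep_diagRefl_mul {K : AddSubgroup (ZMod m)} (hξ : ξ ∈ K) (y : GW m n) :
    Multiset.ReflStep K (cycleWts y) (cycleWts (diagRefl i ξ * y)) := by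
  have hins := (Finset.insert_erase (cycleOf_mem_cycles y i)).symm
  have hcyc : cycles (diagRefl i ξ * y) = cycles y := cycles_eq_of_perm_eq (by simp [diagRefl])
  have hwt : ∀ C, cycWt (diagRefl i ξ * y) C = (if i ∈ C then ξ else 0) + cycWt y C :=
    fun C => by
    rw [cycWt_mul (by simp [diagRefl]), cycWt_diagRefl]
  rw [cycleWts_of_cycles_eq_insert hins (Finset.notMem_erase _ _),
    cycleWts_of_cycles_eq_insert (hcyc.trans hins) (Finset.notMem_erase _ _), hwt,
    if_pos (mem_cycleOf_self y i)]
  convert Multiset.ReflStep.shift _ _ hξ using 2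
  refine Multiset.map_congr rfl fun C hC => ?_
  obtain ⟨hne, hC⟩ := Finset.mem_erase.1 (show C ∈ (cycles y).erase (cycleOf y i) from hC)
  rw [hwt, if_neg fun hi => hne (eq_cycleOf_of_mem hC hi), zero_add]

theorem mem_cycleOf_union : k ∈ cycleOf y i ∪ cycleOf y j ↔
    y.perm.SameCycle i k ∨ y.perm.SameCycle j k := by
  simp [mem_cycleOf]

theorem cycleOf_transRefl_mul (hij : ¬y.perm.SameCycle i j) (k : Fin n) :
    cycleOf (transRefl i j a * y) k = if k ∈ cycleOf y i ∪ cycleOf y j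
      then cycleOf y i ∪ cycleOf y j else cycleOf y k := by
  have hperm : (transRefl i j a * y).perm = Equiv.swap i j * y.perm := rfl
  ext l
  split_ifs with hk
  · rw [mem_cycleOf, hperm, Equiv.Perm.sameCycle_swap_mul_iff_of_sameCycle hij
      (mem_cycleOf_union.1 hk), mem_cycleOf_union]
  · obtain ⟨hi, hj⟩ := not_or.1 (mem_cycleOf_union.not.1 hk)
    rw [mem_cycleOf, mem_cycleOf, hperm,
      Equiv.Perm.sameCycle_swap_mul_iff_of_not_sameCycle hi hj]

theorem cycles_transRefl_mul (hij : ¬y.perm.SameCycle i j) :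
    cycles (transRefl i j a * y) = insert (cycleOf y i ∪ cycleOf y j)
      (((cycles y).erase (cycleOf y i)).erase (cycleOf y j)) := by
  ext C
  simp only [Finset.mem_insert, Finset.mem_erase, mem_cycles, cycleOf_transRefl_mul hij]
  constructor
  · rintro ⟨k, rfl⟩
    split_ifs with hk
    · exact .inl rfl
    · refine .inr ⟨fun h => hk ?_, fun h => hk ?_, k, rfl⟩ <;>
        simp [← h, mem_cycleOf_self]
  · rintro (rfl | ⟨hj, hi, k, rfl⟩)
    · exact ⟨i, if_pos (Finset.mem_union_left _ (mem_cycleOf_self y i))⟩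
    · refine ⟨k, if_neg fun hk => ?_⟩
      rcases mem_cycleOf_union.1 hk with h | h
      · exact hi (cycleOf_eq_cycleOf h).symm
      · exact hj (cycleOf_eq_cycleOf h).symm

theorem cycleWts_transRefl_mul (hij : ¬y.perm.SameCycle i j) :
    ∃ b c M, cycleWts y = b ::ₘ c ::ₘ M ∧
      cycleWts (transRefl i j a * y) = (b + c) ::ₘ M := by
  set Ci := cycleOf y i
  set Cj := cycleOf y j
  set E := ((cycles y).erase Ci).erase Cj
  have hCij : Ci ≠ Cj := fun h =>
    hij (mem_cycleOf.1 (show j ∈ Ci by rw [h]; exact mem_cycleOf_self y j))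
  have hE : ∀ C ∈ E, C ∈ cycles y ∧ i ∉ C ∧ j ∉ C := by
    intro C hC
    obtain ⟨hj, hi, hC⟩ := by simpa [E] using hC
    exact ⟨hC, fun h => hi (eq_cycleOf_of_mem hC h), fun h => hj (eq_cycleOf_of_mem hC h)⟩
  have hy : cycles y = insert Ci (insert Cj E) := by
    rw [Finset.insert_erase (Finset.mem_erase.2 ⟨hCij.symm, cycleOf_mem_cycles y j⟩),
      Finset.insert_erase (cycleOf_mem_cycles y i)]
  have hCiE : Ci ∉ insert Cj E := by
    simp [hCij, E]
  have hunion : Ci ∪ Cj ∉ E := fun h =>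
    (hE _ h).2.1 (Finset.mem_union_left _ (mem_cycleOf_self y i))
  have hwt : ∀ C, (i ∈ C ↔ j ∈ C) → cycWt (transRefl i j a * y) C = cycWt y C :=
    fun C hC => by
    rw [cycWt_mul (swap_mem_iff hC), cycWt_transRefl hC, zero_add]
  refine ⟨cycWt y Ci, cycWt y Cj, E.val.map (cycWt y), ?_, ?_⟩
  · rw [cycleWts_of_cycles_eq_insert hy hCiE, Finset.insert_val_of_notMem (by simp [E]),
      Multiset.map_cons]
  · rw [cycleWts_of_cycles_eq_insert (cycles_transRefl_mul hij) hunion,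
      hwt _ (by simp [mem_cycleOf_self]), cycWt, Finset.sum_union
        (Finset.disjoint_left.2 fun k hi hj => hCij ?_)]
    · exact congrArg _ (Multiset.map_congr rfl fun C hC => hwt C (by simp [(hE C hC).2]))
    · exact (cycleOf_eq_cycleOf (mem_cycleOf.1 hi)).trans
        (cycleOf_eq_cycleOf (mem_cycleOf.1 hj)).symm

end Reflections

section Classification

variable {t : GW m n}

theorem exists_eq_diagRefl (h1 : t.perm = 1) (hc0 : c0 t + 1 = n) :
    ∃ i, t = diagRefl i (t.wt i) := by
  classical
  have hcard : (Finset.univ.filter fun k => ¬t.wt k = 0).card = 1 := by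
    have := Finset.card_filter_add_card_filter_not (s := Finset.univ) fun k => t.wt k = 0
    rw [c0_eq_count, cycleWts_of_perm_eq_one h1, Multiset.count_map] at hc0
    simp only [Finset.card_univ, Fintype.card_fin] at this
    simp only [Finset.card_def, Finset.filter_val, eq_comm (a := (0 : ZMod m))] at hc0 this ⊢
    omega
  obtain ⟨i, hi⟩ := Finset.card_eq_one.1 hcard
  refine ⟨i, GW.ext h1 (funext fun k => ?_)⟩
  rcases eq_or_ne k i with rfl | hk
  · simp [diagRefl]
  · have : k ∉ Finset.univ.filter fun k => ¬t.wt k = 0 := by simp [hi, hk]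
    simpa [diagRefl, hk] using this

theorem exists_perm_eq_swap (h1 : t.perm ≠ 1) (hc0 : c0 t + 1 = n) :
    (∃ i j, i ≠ j ∧ t.perm = Equiv.swap i j) ∧ ∀ C ∈ cycles t, cycWt t C = 0 := by
  classical
  obtain ⟨i, hi⟩ : ∃ i, t.perm i ≠ i := not_forall.1 fun h => h1 (Equiv.ext h)
  set j := t.perm i
  have hij : i ≠ j := Ne.symm hi
  have hcycleOf : ∀ k, cycleOf t (t.perm k) = cycleOf t k := fun k =>
    (cycleOf_eq_cycleOf (Equiv.Perm.sameCycle_of_apply_eq rfl)).symm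
  have hcyc : cycles t = (Finset.univ.erase j).image (cycleOf t) := by
    refine le_antisymm (fun C hC => ?_) (Finset.image_subset_image (Finset.erase_subset _ _))
    obtain ⟨k, rfl⟩ := mem_cycles.1 hC
    rcases eq_or_ne k j with rfl | hk
    · exact hcycleOf i ▸
        Finset.mem_image_of_mem _ (Finset.mem_erase.2 ⟨hij, Finset.mem_univ i⟩)
    · exact Finset.mem_image_of_mem _ (Finset.mem_erase.2 ⟨hk, Finset.mem_univ k⟩)
  have hle : (cycles t).card ≤ n - 1 := hcyc ▸ Finset.card_image_le.trans (by simp)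
  have hc0le : c0 t ≤ (cycles t).card := Finset.card_filter_le _ _
  have hinj : Set.InjOn (cycleOf t) (Finset.univ.erase j) := by
    rw [← Finset.card_image_iff, ← hcyc]
    simp only [Finset.card_erase_of_mem (Finset.mem_univ _), Finset.card_univ, Fintype.card_fin]
    omega
  have hmem : ∀ {k}, k ≠ j → k ∈ (Finset.univ.erase j : Set (Fin n)) := fun hk =>
    Finset.mem_coe.2 (Finset.mem_erase.2 ⟨hk, Finset.mem_univ _⟩)
  have hc0eq : c0 t = (cycles t).card := by omega
  refine ⟨⟨i, j, hij, Equiv.ext fun k => ?_⟩, Finset.filter_card_eq hc0eq⟩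
  rw [Equiv.swap_apply_def]
  split_ifs with hki hkj
  · rw [hki]
  · exact hinj (hmem fun h => hki (t.perm.injective h)) (hmem hij)
      (by rw [hcycleOf, hkj]; exact hcycleOf i)
  · exact hinj (hmem fun h => hki (t.perm.injective h)) (hmem hkj) (hcycleOf k)

theorem eq_transRefl_of_perm_eq_swap {i j : Fin n} (hij : i ≠ j)
    (hperm : t.perm = Equiv.swap i j) (hwt : ∀ C ∈ cycles t, cycWt t C = 0) :
    t = transRefl i j (t.wt i) := by
  have hfix : ∀ k, k ≠ i → k ≠ j → t.perm k = k := fun k hki hkj => by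
    rw [hperm, Equiv.swap_apply_of_ne_of_ne hki hkj]
  have hCi : cycleOf t i = {i, j} := by
    ext l
    refine ⟨fun hl => ?_, fun hl => ?_⟩
    · by_contra h
      simp only [Finset.mem_insert, Finset.mem_singleton, not_or] at h
      exact h.1 ((mem_cycleOf.1 hl).eq_of_right (hfix l h.1 h.2)).symm
    · rcases Finset.mem_insert.1 hl with rfl | hl
      · exact mem_cycleOf_self t l
      · exact mem_cycleOf.2 (Equiv.Perm.sameCycle_of_apply_eq
          (by rw [hperm, Equiv.swap_apply_left, Finset.mem_singleton.1 hl]))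
  have hzero : ∀ k, k ≠ i → k ≠ j → t.wt k = 0 := fun k hki hkj => by
    simpa [cycWt, cycleOf_eq_singleton (hfix k hki hkj)] using hwt _ (cycleOf_mem_cycles t k)
  have hpair : t.wt i + t.wt j = 0 := by
    simpa [cycWt, hCi, Finset.sum_pair hij] using hwt _ (cycleOf_mem_cycles t i)
  refine GW.ext hperm (funext fun k => ?_)
  simp only [transRefl, Pi.sub_apply, Pi.single_apply]
  split_ifs with hki hkj hkj
  · exact absurd (hki.symm.trans hkj) hij
  · simp [hki]
  · rw [hkj, zero_sub, eq_neg_iff_add_eq_zero, add_comm, hpair]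
  · rw [sub_zero, hzero k hki hkj]

theorem wtTot_diagRefl (i : Fin n) (ξ : ZMod m) : wtTot (diagRefl i ξ) = ξ := by
  simp [wtTot, diagRefl]

theorem wtTot_transRefl (i j : Fin n) (a : ZMod m) : wtTot (transRefl i j a) = 0 := by
  simp [wtTot, transRefl, Finset.sum_sub_distrib]

theorem IsRefl.c0_add_one (ht : IsRefl p hpm t) : c0 t + 1 = n := by
  have := c0_le t
  have := ht.2
  unfold codimfix at this
  omega

theorem IsRefl.eq_diagRefl_or_eq_transRefl (ht : IsRefl p hpm t) :
    (∃ i ξ, ξ ∈ wtKer p hpm ∧ t = diagRefl i ξ) ∨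
      ∃ i j a, i ≠ j ∧ t = transRefl i j a := by
  by_cases h1 : t.perm = 1
  · obtain ⟨i, hi⟩ := exists_eq_diagRefl h1 ht.c0_add_one
    have hG := ht.1
    rw [hi, Gmem, wtTot_diagRefl] at hG
    exact .inl ⟨i, _, hG, hi⟩
  · obtain ⟨⟨i, j, hij, hperm⟩, hwt⟩ := exists_perm_eq_swap h1 ht.c0_add_one
    exact .inr ⟨i, j, _, hij, eq_transRefl_of_perm_eq_swap hij hperm hwt⟩

theorem IsRefl.reflStep (ht : IsRefl p hpm t) (y : GW m n) :
    Multiset.ReflStep (wtKer p hpm) (cycleWts y) (cycleWts (t * y)) := by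
  rcases ht.eq_diagRefl_or_eq_transRefl with ⟨i, ξ, hξ, rfl⟩ | ⟨i, j, a, hij, rfl⟩
  · exact reflStep_diagRefl_mul hξ y
  by_cases h : y.perm.SameCycle i j
  · obtain ⟨b, c, M, h1, h2⟩ :=
      cycleWts_transRefl_mul (a := a) (y := transRefl i j a * y)
        (Equiv.Perm.not_sameCycle_swap_mul hij h)
    rw [← mul_assoc, transRefl_mul_self, one_mul] at h2
    rw [h1, h2]
    exact .split b c M
  · obtain ⟨b, c, M, h1, h2⟩ := cycleWts_transRefl_mul (a := a) h
    rw [h1, h2]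
    exact .merge b c M

theorem isRefl_diagRefl (i : Fin n) {ξ : ZMod m} (hξ0 : ξ ≠ 0) (hξ : ξ ∈ wtKer p hpm) :
    IsRefl p hpm (diagRefl i ξ) := by
  refine ⟨by rwa [Gmem, wtTot_diagRefl], ?_⟩
  have : (Finset.univ.filter fun k => 0 = (diagRefl i ξ).wt k) = Finset.univ.erase i := by
    ext k
    rcases eq_or_ne k i with rfl | hk <;>
      simp [diagRefl, Finset.mem_filter, Pi.single_apply, Ne.symm hξ0, *]
  rw [codimfix, c0_eq_count, cycleWts_of_perm_eq_one rfl, Multiset.count_map,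
    ← Finset.filter_val, ← Finset.card_def, this, Finset.card_erase_of_mem (Finset.mem_univ i),
    Finset.card_univ, Fintype.card_fin]
  have := i.pos
  omega

theorem isRefl_transRefl {i j : Fin n} (hij : i ≠ j) (a : ZMod m) :
    IsRefl p hpm (transRefl i j a) := by
  refine ⟨by rw [Gmem, wtTot_transRefl, map_zero], ?_⟩
  obtain ⟨b, c, M, h1, h2⟩ := cycleWts_transRefl_mul (a := a)
    (y := 1) (Equiv.Perm.sameCycle_one.not.2 hij)
  rw [cycleWts_one] at h1
  have hzero : ∀ x ∈ b ::ₘ c ::ₘ M, x = 0 := (Multiset.eq_replicate.1 h1.symm).2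
  have hcard := congrArg Multiset.card h1
  simp only [Multiset.card_cons, Multiset.card_replicate] at hcard
  rw [mul_one] at h2
  rw [codimfix, c0_eq_count, h2, Multiset.count_cons, Multiset.count_eq_card.2 fun x hx =>
    (hzero x (by simp [hx])).symm, if_pos (by simp [hzero b (by simp), hzero c (by simp)])]
  omega

end Classification

section Generation

theorem mk_perm_zero_mem_closure (σ : Equiv.Perm (Fin n)) :
    (⟨σ, 0⟩ : GW m n) ∈ Submonoid.closure {t | IsRefl p hpm t} := by
  induction σ using Equiv.Perm.swap_induction_on with
  | one => exact Submonoid.one_mem _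
  | swap_mul f i j hij ih =>
    have : (⟨Equiv.swap i j * f, 0⟩ : GW m n) = transRefl i j 0 * ⟨f, 0⟩ := by
      ext k <;> simp [transRefl]
    rw [this]
    exact Submonoid.mul_mem _ (Submonoid.subset_closure (isRefl_transRefl hij 0)) ih

theorem mk_one_mem_closure {b : Fin n → ZMod m} (hb : ∑ k, b k ∈ wtKer p hpm) :
    (⟨1, b⟩ : GW m n) ∈ Submonoid.closure {t | IsRefl p hpm t} := by
  set R := Submonoid.closure {t : GW m n | IsRefl p hpm t}
  let D : AddSubmonoid (Fin n → ZMod m) :=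
    { carrier := {b | (⟨1, b⟩ : GW m n) ∈ R}
      zero_mem' := R.one_mem
      add_mem' := fun {b c} hb hc => by
        have : (⟨1, b + c⟩ : GW m n) = ⟨1, b⟩ * ⟨1, c⟩ := by ext k <;> simp
        show (⟨1, b + c⟩ : GW m n) ∈ R
        exact this ▸ R.mul_mem hb hc }
  rcases Nat.eq_zero_or_pos n with rfl | hn
  · have : (⟨1, b⟩ : GW m 0) = 1 := GW.ext rfl (funext fun k => k.elim0)
    exact this ▸ R.one_mem
  set i₀ : Fin n := ⟨0, hn⟩
  have hdiag : ∀ {ξ}, ξ ∈ wtKer p hpm → Pi.single i₀ ξ ∈ D := fun {ξ} hξ => by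
    rcases eq_or_ne ξ 0 with rfl | hξ0
    · simp
    · exact Submonoid.subset_closure (isRefl_diagRefl i₀ hξ0 hξ)
  have htrans : ∀ k c, Pi.single k c - Pi.single i₀ c ∈ D := fun k c => by
    rcases eq_or_ne k i₀ with rfl | hk
    · simp
    · have : (⟨1, Pi.single k c - Pi.single i₀ c⟩ : GW m n) =
          transRefl k i₀ c * transRefl k i₀ 0 := by
        ext l <;> simp [transRefl]
      show (⟨1, Pi.single k c - Pi.single i₀ c⟩ : GW m n) ∈ R
      exact this ▸ R.mul_mem (Submonoid.subset_closure (isRefl_transRefl hk c))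
        (Submonoid.subset_closure (isRefl_transRefl hk 0))
  have hsum :
      b = ∑ k, (Pi.single k (b k) - Pi.single i₀ (b k)) + Pi.single i₀ (∑ k, b k) := by
    ext l
    simp [Finset.sum_apply, Pi.single_apply, Finset.sum_sub_distrib]
  exact hsum ▸ D.add_mem (D.sum_mem fun k _ => htrans k (b k)) (hdiag hb)

theorem mem_closure_isRefl {x : GW m n} (hx : Gmem p hpm x) :
    x ∈ Submonoid.closure {t | IsRefl p hpm t} := by
  have : x = ⟨1, x.wt⟩ * ⟨x.perm, 0⟩ := by ext k <;> simp
  rw [this]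
  exact Submonoid.mul_mem _ (mk_one_mem_closure hx) (mk_perm_zero_mem_closure x.perm)

end Generation

section ReflectionLength

theorem le_length_add_c0 {l : List (GW m n)} (hl : ∀ t ∈ l, IsRefl p hpm t) :
    n ≤ l.length + c0 l.prod := by
  induction l with
  | nil => simp [c0_eq_count, cycleWts_one]
  | cons t l ih =>
    have hstep := ((hl t List.mem_cons_self).reflStep l.prod).count_zero_le
    have := ih fun s hs => hl s (List.mem_cons_of_mem t hs)
    rw [← c0_eq_count, ← c0_eq_count] at hstep
    simp only [List.length_cons, List.prod_cons]
    omega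

/-- Along a factorization into `codimfix` reflections every step removes a weight-zero cycle,
so pairability of the cycle weights, true for the identity, is never lost. -/
theorem pairable_of_length_add_c0_eq {l : List (GW m n)} (hl : ∀ t ∈ l, IsRefl p hpm t)
    (h : l.length + c0 l.prod = n) : (cycleWts l.prod).Pairable (wtKer p hpm) := by
  induction l with
  | nil => simpa [cycleWts_one] using Multiset.pairable_replicate_zero n
  | cons t l ih =>
    have hl' : ∀ s ∈ l, IsRefl p hpm s := fun s hs => hl s (List.mem_cons_of_mem t hs)
    have hstep := (hl t List.mem_cons_self).reflStep l.prod
    have hle := hstep.count_zero_le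
    have := le_length_add_c0 hl'
    rw [← c0_eq_count, ← c0_eq_count] at hle
    simp only [List.length_cons, List.prod_cons] at h ⊢
    exact hstep.pairable (by rw [← c0_eq_count, ← c0_eq_count]; omega) (ih hl' (by omega))

theorem exists_length_eq_lR {x : GW m n} (hx : Gmem p hpm x) :
    ∃ l : List (GW m n), (∀ t ∈ l, IsRefl p hpm t) ∧ l.length = lR p hpm x ∧
      l.prod = x := by
  obtain ⟨l, hl, hprod⟩ := Submonoid.exists_list_of_mem_closure (mem_closure_isRefl hx)
  exact Nat.sInf_mem (s := {k | ∃ l : List (GW m n), (∀ t ∈ l, IsRefl p hpm t) ∧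
    l.length = k ∧ l.prod = x}) ⟨l.length, l, hl, rfl, hprod⟩

theorem codimfix_le_lR {x : GW m n} (hx : Gmem p hpm x) : codimfix x ≤ lR p hpm x := by
  obtain ⟨l, hl, hlen, rfl⟩ := exists_length_eq_lR hx
  have := le_length_add_c0 hl
  unfold codimfix
  omega

theorem pairable_of_lR_eq_codimfix {x : GW m n} (hx : Gmem p hpm x)
    (h : lR p hpm x = codimfix x) : (cycleWts x).Pairable (wtKer p hpm) := by
  obtain ⟨l, hl, hlen, rfl⟩ := exists_length_eq_lR hx
  have := le_length_add_c0 hl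
  have := c0_le l.prod
  exact pairable_of_length_add_c0_eq hl (by unfold codimfix at h; omega)

end ReflectionLength

section Restrict

variable {w : GW m n} {A : Finset (Fin n)} {k : Fin n}

theorem restrictPerm_apply {σ : Equiv.Perm (Fin n)} (h : ∀ i, σ i ∈ A ↔ i ∈ A)
    (k : Fin n) :
    restrictPerm σ A k = if k ∈ A then σ k else k := by
  unfold restrictPerm
  rw [dif_pos h]
  rfl

theorem restrictPerm_inv_apply {σ : Equiv.Perm (Fin n)} (h : ∀ i, σ i ∈ A ↔ i ∈ A)
    (k : Fin n) :
    (restrictPerm σ A)⁻¹ k = if k ∈ A then σ⁻¹ k else k := by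
  unfold restrictPerm
  rw [dif_pos h]
  rfl

theorem restrict_mul_restrict_compl (hA : ∀ i, w.perm i ∈ A ↔ i ∈ A) :
    restrict w A * restrict w Aᶜ = w := by
  have hAc : ∀ i, w.perm i ∈ Aᶜ ↔ i ∈ Aᶜ := fun i => by simp [hA]
  ext k
  · simp only [restrict, mul_perm, Equiv.Perm.mul_apply, restrictPerm_apply hA,
      restrictPerm_apply hAc, Finset.mem_compl]
    by_cases hk : k ∈ A <;> simp [hk, hA]
  · simp only [restrict, mul_wt, restrictPerm_inv_apply hA, Finset.mem_compl]
    by_cases hk : k ∈ A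
    · have : w.perm.symm k ∈ A := by simpa [hk] using hA (w.perm.symm k)
      simp [hk, this]
    · simp [hk]

theorem cycleOf_subset (hA : ∀ i, w.perm i ∈ A ↔ i ∈ A) (hk : k ∈ A) :
    cycleOf w k ⊆ A :=
  fun _ hl => (mem_cycleOf.1 hl).mem_of_mapsTo (s := A) hk fun i => (hA i).2

theorem cycleOf_restrict (hA : ∀ i, w.perm i ∈ A ↔ i ∈ A) (k : Fin n) :
    cycleOf (restrict w A) k = if k ∈ A then cycleOf w k else {k} := by
  have hu : ∀ i ∈ A, (restrict w A).perm i = w.perm i := fun i hi => by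
    simp [restrict, restrictPerm_apply hA, hi]
  split_ifs with hk
  · ext l
    rw [mem_cycleOf, mem_cycleOf]
    constructor
    · intro h
      exact (h.mem_of_mapsTo (s := {l | w.perm.SameCycle k l ∧ l ∈ A}) ⟨.rfl, hk⟩
        fun i ⟨hi, hiA⟩ => ⟨hu i hiA ▸ Equiv.Perm.sameCycle_apply_right.2 hi,
          hu i hiA ▸ (hA i).2 hiA⟩).1
    · intro h
      exact (h.mem_of_mapsTo (s := {l | (restrict w A).perm.SameCycle k l ∧ l ∈ A})
        ⟨.rfl, hk⟩
        fun i ⟨hi, hiA⟩ => ⟨(hu i hiA).symm ▸ Equiv.Perm.sameCycle_apply_right.2 hi,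
          (hA i).2 hiA⟩).1
  · exact cycleOf_eq_singleton (by simp [restrict, restrictPerm_apply hA, hk])

theorem cycleWts_restrict (hA : ∀ i, w.perm i ∈ A ↔ i ∈ A) :
    cycleWts (restrict w A) = ((cycles w).filter (· ⊆ A)).val.map (cycWt w)
      + Multiset.replicate Aᶜ.card 0 := by
  have hdisj : Disjoint ((cycles w).filter (· ⊆ A)) (Aᶜ.image fun k => {k}) := by
    refine Finset.disjoint_left.2 fun C hC hC' => ?_
    obtain ⟨k, hk, rfl⟩ := Finset.mem_image.1 hC'
    exact Finset.mem_compl.1 hk ((Finset.mem_filter.1 hC).2 (Finset.mem_singleton_self k))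
  have hcyc : cycles (restrict w A) = ((cycles w).filter (· ⊆ A)).disjUnion _ hdisj := by
    ext C
    simp only [Finset.disjUnion_eq_union, Finset.mem_union, Finset.mem_filter, mem_cycles,
      Finset.mem_image, Finset.mem_compl, cycleOf_restrict hA]
    constructor
    · rintro ⟨k, rfl⟩
      split_ifs with hk
      · exact .inl ⟨⟨k, rfl⟩, cycleOf_subset hA hk⟩
      · exact .inr ⟨k, hk, rfl⟩
    · rintro (⟨⟨k, rfl⟩, hkA⟩ | ⟨k, hk, rfl⟩)
      · exact ⟨k, if_pos (hkA (mem_cycleOf_self w k))⟩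
      · exact ⟨k, if_neg hk⟩
  rw [cycleWts, hcyc, Finset.disjUnion_val, Multiset.map_add]
  congr 1
  · refine Multiset.map_congr rfl fun C hC => Finset.sum_congr rfl fun k hk => ?_
    have hC : C ∈ (cycles w).filter (· ⊆ A) := hC
    have hCA : C ⊆ A := (Finset.mem_filter.1 hC).2
    simp [restrict, hCA hk]
  · rw [Multiset.eq_replicate, Multiset.card_map, ← Finset.card_def,
      Finset.card_image_of_injective _ fun _ _ => Finset.singleton_inj.1]
    refine ⟨rfl, fun b hb => ?_⟩
    obtain ⟨C, hC, rfl⟩ := Multiset.mem_map.1 hb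
    have hC : C ∈ Aᶜ.image fun k => {k} := hC
    obtain ⟨k, hk, rfl⟩ := Finset.mem_image.1 hC
    simp [cycWt, restrict, Finset.mem_compl.1 hk]

theorem c0_restrict_add_c0_restrict_compl (hA : ∀ i, w.perm i ∈ A ↔ i ∈ A) :
    c0 (restrict w A) + c0 (restrict w Aᶜ) = c0 w + n := by
  have hAc : ∀ i, w.perm i ∈ Aᶜ ↔ i ∈ Aᶜ := fun i => by simp [hA]
  have hsplit :
      ((cycles w).val.filter fun C => ¬C ⊆ A) = (cycles w).val.filter (· ⊆ Aᶜ) := by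
    refine Multiset.filter_congr fun C hC => ?_
    obtain ⟨k, rfl⟩ := mem_cycles.1 hC
    by_cases hk : k ∈ A
    · simp only [cycleOf_subset hA hk, not_true_eq_false, false_iff]
      exact fun h => Finset.mem_compl.1 (h (mem_cycleOf_self w k)) hk
    · simp only [cycleOf_subset hAc (Finset.mem_compl.2 hk), iff_true]
      exact fun h => hk (h (mem_cycleOf_self w k))
  have hw : cycleWts w = ((cycles w).filter (· ⊆ A)).val.map (cycWt w)
      + ((cycles w).filter (· ⊆ Aᶜ)).val.map (cycWt w) := by
    rw [Finset.filter_val, Finset.filter_val, ← hsplit, ← Multiset.map_add,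
      Multiset.filter_add_not, cycleWts]
  have hcard : A.card + Aᶜ.card = n := by
    rw [Finset.card_compl, Fintype.card_fin]
    have := Finset.card_le_univ A
    simp only [Fintype.card_fin] at this
    omega
  rw [c0_eq_count, c0_eq_count, c0_eq_count, cycleWts_restrict hA, cycleWts_restrict hAc, hw,
    compl_compl]
  simp only [Multiset.count_add, Multiset.count_replicate_self]
  omega

theorem codimfix_restrict_add_codimfix_restrict_compl (hA : ∀ i, w.perm i ∈ A ↔ i ∈ A) :
    codimfix (restrict w A) + codimfix (restrict w Aᶜ) = codimfix w := by
  have := c0_restrict_add_c0_restrict_compl hA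
  have := c0_le (restrict w A)
  have := c0_le (restrict w Aᶜ)
  unfold codimfix
  omega

theorem wtTot_restrict (w : GW m n) (A : Finset (Fin n)) :
    wtTot (restrict w A) = ∑ k ∈ A, w.wt k := by
  simp [wtTot, restrict, Finset.sum_ite_mem]

end Restrict

section Support

variable {w : GW m n} {S : Finset (Finset (Fin n))}

theorem mem_supp {k : Fin n} : k ∈ supp S ↔ ∃ C ∈ S, k ∈ C := by
  simp [supp, Finset.mem_sup]

theorem perm_mem_supp_iff (hS : S ⊆ cycles w) (k : Fin n) :
    w.perm k ∈ supp S ↔ k ∈ supp S := by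
  simp only [mem_supp]
  exact exists_congr fun C => and_congr_right fun hC => perm_mem_iff_of_mem_cycles (hS hC)

theorem filter_cycles_subset_supp (hS : S ⊆ cycles w) : (cycles w).filter (· ⊆ supp S) = S := by
  ext C
  simp only [Finset.mem_filter]
  refine ⟨fun ⟨hC, hCS⟩ => ?_, fun h => ⟨hS h, fun k hk => mem_supp.2 ⟨C, h, hk⟩⟩⟩
  obtain ⟨i, rfl⟩ := mem_cycles.1 hC
  obtain ⟨C', hC', hi⟩ := mem_supp.1 (hCS (mem_cycleOf_self w i))
  rwa [eq_cycleOf_of_mem (hS hC') hi] at hC'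

theorem wtTot_restrict_supp (hS : S ⊆ cycles w) :
    wtTot (restrict w (supp S)) = partWt w S := by
  rw [wtTot_restrict, supp, Finset.sup_eq_biUnion, Finset.sum_biUnion (t := id)
    fun C hC D hD hne => disjoint_of_mem_cycles (hS hC) (hS hD) hne]
  rfl

theorem pairedUp_of_pairable_restrict (hS : S ⊆ cycles w)
    (h : (cycleWts (restrict w (supp S))).Pairable (wtKer p hpm)) : PairedUp p hpm w S := by
  rw [cycleWts_restrict (perm_mem_supp_iff hS), filter_cycles_subset_supp hS] at h
  obtain ⟨π, hπ⟩ := h.of_add_replicate_zero.exists_pairing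
  exact ⟨fun C => ⟨π C, (hπ C C.2).1⟩, fun C => Subtype.ext (hπ C C.2).2.1,
    fun C hC => (hπ C C.2).2.2.1 (congrArg Subtype.val hC),
    fun C hC => (hπ C C.2).2.2.2 fun h => hC (Subtype.ext h)⟩

end Support

end GW

theorem stmt5_general (m p n : ℕ) (hpm : p ∣ m)
    (w : GW m n) (hw : GW.Gmem p hpm w)
    (heq : GW.lR p hpm w = GW.codimfix w)
    (S : Finset (Finset (Fin n))) (hS : S ⊆ GW.cycles w)
    (hS0 : ZMod.castHom hpm (ZMod p) (GW.partWt w S) = 0)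
    (hSnot : ¬ GW.PairedUp p hpm w S) :
    ∃ u : GW m n, u ∈ GW.interval p hpm GW.codimfix w ∧
      u ∉ GW.interval p hpm (GW.lR p hpm) w := by
  open GW in
  have hA := perm_mem_supp_iff hS
  have hsplit : (restrict w (supp S))⁻¹ * w = restrict w (supp S)ᶜ :=
    inv_mul_eq_of_eq_mul (restrict_mul_restrict_compl hA).symm
  have huG : Gmem p hpm (restrict w (supp S)) := by
    rw [Gmem, wtTot_restrict_supp hS]
    exact hS0
  have hvG : Gmem p hpm (restrict w (supp S)ᶜ) :=
    Gmem.of_mul ((restrict_mul_restrict_compl hA).symm ▸ hw) huG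
  refine ⟨restrict w (supp S), ⟨huG, ?_⟩, fun ⟨_, hle⟩ => hSnot ?_⟩
  · rw [leF, hsplit]
    exact codimfix_restrict_add_codimfix_restrict_compl hA
  · rw [leF, hsplit, heq, ← codimfix_restrict_add_codimfix_restrict_compl hA] at hle
    have := codimfix_le_lR huG
    have := codimfix_le_lR hvG
    exact pairedUp_of_pairable_restrict hS (pairable_of_lR_eq_codimfix huG (by omega))

/-- Let `w ∈ G(m,p,n)` with `ℓ_R(w) = codimfix(w)`, and suppose there is a subset `S` of
the cycles of `w` whose total weight is `0 (mod p)` but which cannot be partitioned into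
pairs of cycles whose weights sum to `0` in `ℤ/mℤ` together with singletons containing a
cycle of weight `0 (mod p)`.  Then some element of `[id, w]_{cdf}` does not belong to
`[id, w]_{ℓ_R}`. -/
theorem stmt5 (m p n : ℕ) (hm : 0 < m) (hp : 0 < p) (hn : 0 < n) (hpm : p ∣ m)
    (w : GW m n) (hw : GW.Gmem p hpm w)
    (heq : GW.lR p hpm w = GW.codimfix w)
    (S : Finset (Finset (Fin n))) (hS : S ⊆ GW.cycles w)
    (hS0 : ZMod.castHom hpm (ZMod p) (GW.partWt w S) = 0)
    (hSnot : ¬ GW.PairedUp p hpm w S) :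
    ∃ u : GW m n, u ∈ GW.interval p hpm GW.codimfix w ∧
      u ∉ GW.interval p hpm (GW.lR p hpm) w :=
  stmt5_general m p n hpm w hw heq S hS hS0 hSnot
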